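/- arXiv:1401.3992 — 8 statements merged into one kernel-verified Lean document; each statement's English description precedes it below -/
import Mathlib

section
/- The 5-dimensional commutative algebra over a field k of characteristic ≠ 2 with basis a,b,c,d,e and nonzero products a∘b = c, a∘c = d, b∘c = e (all other basis products zero) is a nilpotent Jordan algebra that is not associative, and its center is spanned by d and e. -/
/-- `IsWord mul n x` means that `x` is a product of `n` elements of the algebra,
in some association. -/
inductive IsWord {J : Type*} (mul : J → J → J) : ℕ → J → Prop
  | single (x : J) : IsWord mul 1 x
  | mul_mem {m n : ℕ} {x y : J} :
      IsWord mul m x → IsWord mul n y → IsWord mul (m + n) (mul x y)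

private lemma word_aux {k : Type*} [Field k] {n : ℕ} {x : Fin 5 → k}
    (h : IsWord (fun x y : Fin 5 → k =>
      ![0, 0, x 0 * y 1 + x 1 * y 0, x 0 * y 2 + x 2 * y 0,
        x 1 * y 2 + x 2 * y 1]) n x) :
    1 ≤ n ∧ (2 ≤ n → x 0 = 0 ∧ x 1 = 0) ∧ (3 ≤ n → x 2 = 0) ∧ (4 ≤ n → x = 0) := by
  induction h with
  | single x => exact ⟨le_refl 1, by omega, by omega, by omega⟩
  | @mul_mem m n x y hx hy ihx ihy =>
    obtain ⟨hm1, hx2, hx3, hx4⟩ := ihx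
    obtain ⟨hn1, hy2, hy3, hy4⟩ := ihy
    refine ⟨by omega, fun _ => ⟨rfl, rfl⟩, ?_, ?_⟩
    · intro h3
      have : 2 ≤ m ∨ 2 ≤ n := by omega
      show x 0 * y 1 + x 1 * y 0 = 0
      rcases this with h | h
      · obtain ⟨h0, h1⟩ := hx2 h; rw [h0, h1]; ring
      · obtain ⟨h0, h1⟩ := hy2 h; rw [h0, h1]; ring
    · intro h4
      have : (2 ≤ m ∧ 2 ≤ n) ∨ 3 ≤ m ∨ 3 ≤ n := by omega
      rcases this with ⟨hm, hn⟩ | h | h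
      · obtain ⟨x0, x1⟩ := hx2 hm
        obtain ⟨y0, y1⟩ := hy2 hn
        funext i; fin_cases i <;> simp [x0, x1, y0, y1]
      · obtain ⟨x0, x1⟩ := hx2 (by omega)
        have x2 := hx3 h
        funext i; fin_cases i <;> simp [x0, x1, x2]
      · obtain ⟨y0, y1⟩ := hy2 (by omega)
        have y2 := hy3 h
        funext i; fin_cases i <;> simp [y0, y1, y2]

/-- The 5-dimensional algebra `J₅,₃₇` with nonzero products
`a∘b = c`, `a∘c = d`, `b∘c = e` is a nilpotent non-associative Jordan algebra
whose center is spanned by `d` and `e`. -/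
theorem stmt_8 {k : Type*} [Field k] (hchar : (2 : k) ≠ 0) :
    let mul : (Fin 5 → k) → (Fin 5 → k) → (Fin 5 → k) := fun x y =>
      ![0, 0, x 0 * y 1 + x 1 * y 0, x 0 * y 2 + x 2 * y 0,
        x 1 * y 2 + x 2 * y 1]
    -- commutative
    (∀ x y, mul x y = mul y x) ∧
    -- Jordan identity
    (∀ x y, mul (mul x y) (mul x x) = mul x (mul y (mul x x))) ∧
    -- nilpotent
    (∃ N : ℕ, 0 < N ∧ ∀ (n : ℕ) (x : Fin 5 → k), N ≤ n → IsWord mul n x → x = 0) ∧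
    -- not associative
    (¬ (∀ x y z, mul (mul x y) z = mul x (mul y z))) ∧
    -- the center is spanned by d and e
    ({z : Fin 5 → k | ∀ x, mul z x = 0} =
      ↑(Submodule.span k {(Pi.single 3 1 : Fin 5 → k), (Pi.single 4 1 : Fin 5 → k)})) := by
  intro mul
  refine ⟨?_, ?_, ?_, ?_, ?_⟩
  · intro x y; funext i; fin_cases i <;> simp [mul] <;> ring
  · intro x y; funext i; fin_cases i <;> simp [mul]
  · exact ⟨4, by norm_num, fun n x hn h => (word_aux h).2.2.2 hn⟩
  · intro h
    have := congrFun (h (Pi.single 0 1) (Pi.single 0 1) (Pi.single 1 1)) 3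
    simp [mul, Pi.single_apply] at this
  · ext z
    simp only [Set.mem_setOf_eq, SetLike.mem_coe, Submodule.mem_span_pair]
    constructor
    · intro hz
      have h0 : z 0 = 0 := by
        have := congrFun (hz (Pi.single 1 1)) 2
        simpa [mul, Pi.single_apply] using this
      have h1 : z 1 = 0 := by
        have := congrFun (hz (Pi.single 0 1)) 2
        simpa [mul, Pi.single_apply] using this
      have h2 : z 2 = 0 := by
        have := congrFun (hz (Pi.single 0 1)) 3
        simpa [mul, Pi.single_apply, h0] using this
      exact ⟨z 3, z 4, by funext i; fin_cases i <;>
        simp [Pi.single_apply, h0, h1, h2]⟩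
    · rintro ⟨a, b, rfl⟩ x
      funext i; fin_cases i <;> simp [mul, Pi.single_apply]
end

section
/- Let k be a field of characteristic ≠ 2 containing a square root σ of -1. The 4-dimensional commutative algebras J₁ with basis a',b',c',d' and nonzero products a'² = c', b'² = c', and J₄,₃ with basis a,b,c,d and nonzero product a∘b = c, are isomorphic via the linear map a' ↦ a + b/2, b' ↦ σ(a - b/2), c' ↦ c, d' ↦ d. -/
/-- Over a field `k` of characteristic ≠ 2 containing a square root `σ` of `-1`,
the 4-dimensional commutative algebras `J₁` (with `a'² = c'`, `b'² = c'`) and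
`J₄,₃` (with `a∘b = c`) are isomorphic via
`a' ↦ a + b/2`, `b' ↦ σ(a - b/2)`, `c' ↦ c`, `d' ↦ d`. -/
theorem stmt_9 {k : Type*} [Field k] (hchar : (2 : k) ≠ 0)
    (σ : k) (hσ : σ ^ 2 = -1) :
    let mul1 : (Fin 4 → k) → (Fin 4 → k) → (Fin 4 → k) := fun x y =>
      ![0, 0, x 0 * y 0 + x 1 * y 1, 0]
    let mul2 : (Fin 4 → k) → (Fin 4 → k) → (Fin 4 → k) := fun x y =>
      ![0, 0, x 0 * y 1 + x 1 * y 0, 0]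
    let φ : (Fin 4 → k) → (Fin 4 → k) := fun x =>
      ![x 0 + σ * x 1, x 0 / 2 - σ * x 1 / 2, x 2, x 3]
    (∀ x y, φ (x + y) = φ x + φ y) ∧
    (∀ (c : k) (x), φ (c • x) = c • φ x) ∧
    Function.Bijective φ ∧
    (∀ x y, φ (mul1 x y) = mul2 (φ x) (φ y)) := by
  intro mul1 mul2 φ
  have hσ0 : σ ≠ 0 := by
    intro h
    rw [h] at hσ
    simp at hσ
  refine ⟨?_, ?_, ?_, ?_⟩
  · intro x y
    funext i
    fin_cases i <;> simp [φ] <;> ring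
  · intro c x
    funext i
    fin_cases i <;> simp [φ] <;> ring
  · have hinv : Function.LeftInverse
        (fun u : Fin 4 → k => ![u 0 / 2 + u 1, (u 0 / 2 - u 1) / σ, u 2, u 3]) φ ∧
        Function.RightInverse
        (fun u : Fin 4 → k => ![u 0 / 2 + u 1, (u 0 / 2 - u 1) / σ, u 2, u 3]) φ := by
      constructor <;> intro x <;> funext i <;> fin_cases i <;>
        simp [φ] <;> field_simp <;> ring
    exact ⟨hinv.1.injective, hinv.2.surjective⟩
  · intro x y
    funext i
    fin_cases i <;> simp [φ, mul1, mul2]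
    field_simp
    linear_combination (2 * x 1 * y 1) * hσ
end

section
/- Over a field k of characteristic ≠ 2, the 4-dimensional commutative algebra with nonzero products a'² = c', b'² = -c', a'∘c' = d', b'∘c' = d', a'∘b' = d' is isomorphic to the algebra J₄,₉ with nonzero products a∘b = c, a∘c = d, b² = d, via the map a' ↦ a - b - c/2, b' ↦ a + b - c/2, c' ↦ -2c, d' ↦ -2d. -/
/-! The map is linear with the explicit inverse `isoInv`, which divides by 2; that it is
multiplicative is a polynomial identity in the coordinates, checked on each of the four. -/

namespace J4

variable {k : Type*} [Field k]

-- Coordinates of `J₄` are taken in the basis `(a', b', c', d')`, those of `J₄,₉` in `(a, b, c, d)`.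
def mul (x y : Fin 4 → k) : Fin 4 → k :=
  ![0, 0, x 0 * y 0 - x 1 * y 1,
    x 0 * y 2 + x 2 * y 0 + x 1 * y 2 + x 2 * y 1 + x 0 * y 1 + x 1 * y 0]

def mul₉ (x y : Fin 4 → k) : Fin 4 → k :=
  ![0, 0, x 0 * y 1 + x 1 * y 0, x 0 * y 2 + x 2 * y 0 + x 1 * y 1]

def iso (x : Fin 4 → k) : Fin 4 → k :=
  ![x 0 + x 1, -x 0 + x 1, -(x 0) / 2 - x 1 / 2 - 2 * x 2, -2 * x 3]

def isoInv (y : Fin 4 → k) : Fin 4 → k :=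
  ![(y 0 - y 1) / 2, (y 0 + y 1) / 2, -(y 0 / 2 + y 2) / 2, -(y 3) / 2]

variable (h2 : (2 : k) ≠ 0)
include h2

theorem isoInv_iso (x : Fin 4 → k) : isoInv (iso x) = x := by
  ext i
  fin_cases i <;> simp [iso, isoInv] <;> field_simp <;> ring

theorem iso_isoInv (y : Fin 4 → k) : iso (isoInv y) = y := by
  ext i
  fin_cases i <;> simp [iso, isoInv] <;> field_simp <;> ring

def isoEquiv : (Fin 4 → k) ≃ₗ[k] (Fin 4 → k) where
  toFun := iso
  invFun := isoInv
  map_add' x y := by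
    ext i
    fin_cases i <;> simp [iso] <;> ring
  map_smul' c x := by
    ext i
    fin_cases i <;> simp [iso] <;> ring
  left_inv := isoInv_iso h2
  right_inv := iso_isoInv h2

theorem iso_mul (x y : Fin 4 → k) : iso (mul x y) = mul₉ (iso x) (iso y) := by
  ext i
  fin_cases i <;> simp [iso, mul, mul₉] <;> field_simp <;> ring

end J4

/-- Over a field `k` of characteristic ≠ 2, the 4-dimensional algebra `J₄`
(with `a'² = c'`, `b'² = -c'`, `a'∘c' = d'`, `b'∘c' = d'`, `a'∘b' = d'`) is
isomorphic to `J₄,₉` (with `a∘b = c`, `a∘c = d`, `b² = d`) via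
`a' ↦ a - b - c/2`, `b' ↦ a + b - c/2`, `c' ↦ -2c`, `d' ↦ -2d`. -/
theorem stmt_11 {k : Type*} [Field k] (hchar : (2 : k) ≠ 0) :
    let mul1 : (Fin 4 → k) → (Fin 4 → k) → (Fin 4 → k) := fun x y =>
      ![0, 0, x 0 * y 0 - x 1 * y 1,
        x 0 * y 2 + x 2 * y 0 + x 1 * y 2 + x 2 * y 1 + x 0 * y 1 + x 1 * y 0]
    let mul2 : (Fin 4 → k) → (Fin 4 → k) → (Fin 4 → k) := fun x y =>
      ![0, 0, x 0 * y 1 + x 1 * y 0, x 0 * y 2 + x 2 * y 0 + x 1 * y 1]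
    let φ : (Fin 4 → k) → (Fin 4 → k) := fun x =>
      ![x 0 + x 1, -x 0 + x 1, -(x 0) / 2 - x 1 / 2 - 2 * x 2, -2 * x 3]
    (∀ x y, φ (x + y) = φ x + φ y) ∧
    (∀ (c : k) (x), φ (c • x) = c • φ x) ∧
    Function.Bijective φ ∧
    (∀ x y, φ (mul1 x y) = mul2 (φ x) (φ y)) :=
  let e := J4.isoEquiv hchar
  ⟨e.map_add, e.map_smul, e.bijective, J4.iso_mul hchar⟩
end

section
/- For any α ∈ k (field of characteristic ≠ 2), the 5-dimensional algebras J₅,₂₆^α with nonzero products a² = c, a∘b = d, a∘c = e, b∘d = e, b∘c = αe and J₅,₂₆^{-α} (same products with α replaced by -α) are isomorphic via the map a ↦ a', b ↦ -b', c ↦ c', d ↦ -d', e ↦ e'. -/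
/-- For any `α ∈ k`, the 5-dimensional algebras `J₅,₂₆^α` (with `a² = c`,
`a∘b = d`, `a∘c = e`, `b∘d = e`, `b∘c = αe`) and `J₅,₂₆^{-α}` are isomorphic
via `a ↦ a'`, `b ↦ -b'`, `c ↦ c'`, `d ↦ -d'`, `e ↦ e'`. -/
theorem stmt_13 {k : Type*} [Field k] (hchar : (2 : k) ≠ 0) (α : k) :
    let mul : k → (Fin 5 → k) → (Fin 5 → k) → (Fin 5 → k) := fun β x y =>
      ![0, 0, x 0 * y 0, x 0 * y 1 + x 1 * y 0,
        x 0 * y 2 + x 2 * y 0 + x 1 * y 3 + x 3 * y 1 + β * (x 1 * y 2 + x 2 * y 1)]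
    let φ : (Fin 5 → k) → (Fin 5 → k) := fun x =>
      ![x 0, -x 1, x 2, -x 3, x 4]
    (∀ x y, φ (x + y) = φ x + φ y) ∧
    (∀ (c : k) (x), φ (c • x) = c • φ x) ∧
    Function.Bijective φ ∧
    (∀ x y, φ (mul α x y) = mul (-α) (φ x) (φ y)) := by
  intro mul φ
  refine ⟨?_, ?_, ?_, ?_⟩
  · intro x y; funext i; fin_cases i <;> simp [φ] <;> ring
  · intro c x; funext i; fin_cases i <;> simp [φ] <;> ring
  · have h : ∀ x, φ (φ x) = x := by
      intro x; funext i; fin_cases i <;> simp [φ]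
    exact Function.bijective_iff_has_inverse.mpr ⟨φ, h, h⟩
  · intro x y; funext i; fin_cases i <;> simp [φ, mul] <;> ring
end

section
/- For any α ∈ k (field of characteristic ≠ 2), the 5-dimensional algebras J₅,₂₉^α with nonzero products a² = c, b² = d, a∘c = e, a∘d = e, b∘d = αe and J₅,₂₉^{-α} are isomorphic via the map a ↦ a', b ↦ -b', c ↦ c', d ↦ d', e ↦ e'. -/
/-- For any `α ∈ k`, the 5-dimensional algebras `J₅,₂₉^α` (with `a² = c`,
`b² = d`, `a∘c = e`, `a∘d = e`, `b∘d = αe`) and `J₅,₂₉^{-α}` are isomorphic via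
`a ↦ a'`, `b ↦ -b'`, `c ↦ c'`, `d ↦ d'`, `e ↦ e'`. -/
theorem stmt_14 {k : Type*} [Field k] (hchar : (2 : k) ≠ 0) (α : k) :
    let mul : k → (Fin 5 → k) → (Fin 5 → k) → (Fin 5 → k) := fun β x y =>
      ![0, 0, x 0 * y 0, x 1 * y 1,
        x 0 * y 2 + x 2 * y 0 + x 0 * y 3 + x 3 * y 0 + β * (x 1 * y 3 + x 3 * y 1)]
    let φ : (Fin 5 → k) → (Fin 5 → k) := fun x =>
      ![x 0, -x 1, x 2, x 3, x 4]
    (∀ x y, φ (x + y) = φ x + φ y) ∧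
    (∀ (c : k) (x), φ (c • x) = c • φ x) ∧
    Function.Bijective φ ∧
    (∀ x y, φ (mul α x y) = mul (-α) (φ x) (φ y)) := by
  intro mul φ
  refine ⟨?_, ?_, ?_, ?_⟩
  · intro x y
    funext i
    fin_cases i <;> simp [φ] <;> ring
  · intro c x
    funext i
    fin_cases i <;> simp [φ] <;> ring
  · constructor
    · intro x y h
      funext i
      have h0 := congrFun h 0
      have h1 := congrFun h 1
      have h2 := congrFun h 2
      have h3 := congrFun h 3
      have h4 := congrFun h 4
      simp [φ] at h0 h1 h2 h3 h4
      fin_cases i <;> assumption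
    · intro y
      refine ⟨![y 0, -y 1, y 2, y 3, y 4], ?_⟩
      funext i
      fin_cases i <;> simp [φ]
  · intro x y
    funext i
    fin_cases i <;> simp [mul, φ] <;> ring
end

section
/- For any α, β ∈ k (field of characteristic ≠ 2), the 5-dimensional algebras J₅,₃₀^{α,β} with nonzero products a² = c, b² = d, b∘c = e, a∘d = e, b∘d = αe, a∘c = βe and J₅,₃₀^{β,α} are isomorphic via the map a ↦ b', b ↦ a', c ↦ d', d ↦ c', e ↦ e'. -/
/-- For any `α, β ∈ k`, the 5-dimensional algebras `J₅,₃₀^{α,β}` (with `a² = c`,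
`b² = d`, `b∘c = e`, `a∘d = e`, `b∘d = αe`, `a∘c = βe`) and `J₅,₃₀^{β,α}` are
isomorphic via `a ↦ b'`, `b ↦ a'`, `c ↦ d'`, `d ↦ c'`, `e ↦ e'`. -/
theorem stmt_15 {k : Type*} [Field k] (hchar : (2 : k) ≠ 0) (α β : k) :
    let mul : k → k → (Fin 5 → k) → (Fin 5 → k) → (Fin 5 → k) := fun α' β' x y =>
      ![0, 0, x 0 * y 0, x 1 * y 1,
        x 1 * y 2 + x 2 * y 1 + x 0 * y 3 + x 3 * y 0 +
          α' * (x 1 * y 3 + x 3 * y 1) + β' * (x 0 * y 2 + x 2 * y 0)]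
    let φ : (Fin 5 → k) → (Fin 5 → k) := fun x =>
      ![x 1, x 0, x 3, x 2, x 4]
    (∀ x y, φ (x + y) = φ x + φ y) ∧
    (∀ (c : k) (x), φ (c • x) = c • φ x) ∧
    Function.Bijective φ ∧
    (∀ x y, φ (mul α β x y) = mul β α (φ x) (φ y)) := by
  intro mul φ
  refine ⟨?_, ?_, ?_, ?_⟩
  · intro x y; funext i; fin_cases i <;> simp [φ]
  · intro c x; funext i; fin_cases i <;> simp [φ]
  · constructor
    · intro x y h
      funext i
      have h0 := congrFun h 0
      have h1 := congrFun h 1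
      have h2 := congrFun h 2
      have h3 := congrFun h 3
      have h4 := congrFun h 4
      simp [φ] at h0 h1 h2 h3 h4
      fin_cases i <;> assumption
    · intro y
      exact ⟨![y 1, y 0, y 3, y 2, y 4], by funext i; fin_cases i <;> simp [φ]⟩
  · intro x y; funext i; fin_cases i <;> simp [mul, φ] <;> ring
end

section
/- For any nonzero α ∈ k (field of characteristic ≠ 2 containing appropriate roots, e.g. k algebraically closed), the 5-dimensional algebras J₅,₄₄^α with nonzero products a∘b = c, a∘c = d, b∘c = d, a² = e, b² = αe and J₅,₄₄^{α⁻¹} are isomorphic via the map a ↦ αb', b ↦ αa', c ↦ α²c', d ↦ α³d', e ↦ αe'. -/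
/-- For any nonzero `α ∈ k`, the 5-dimensional algebras `J₅,₄₄^α` (with
`a∘b = c`, `a∘c = d`, `b∘c = d`, `a² = e`, `b² = αe`) and `J₅,₄₄^{α⁻¹}` are
isomorphic via `a ↦ αb'`, `b ↦ αa'`, `c ↦ α²c'`, `d ↦ α³d'`, `e ↦ αe'`. -/
theorem stmt_16 {k : Type*} [Field k] (hchar : (2 : k) ≠ 0) (α : k) (hα : α ≠ 0) :
    let mul : k → (Fin 5 → k) → (Fin 5 → k) → (Fin 5 → k) := fun β x y =>
      ![0, 0, x 0 * y 1 + x 1 * y 0,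
        x 0 * y 2 + x 2 * y 0 + x 1 * y 2 + x 2 * y 1,
        x 0 * y 0 + β * (x 1 * y 1)]
    let φ : (Fin 5 → k) → (Fin 5 → k) := fun x =>
      ![α * x 1, α * x 0, α ^ 2 * x 2, α ^ 3 * x 3, α * x 4]
    (∀ x y, φ (x + y) = φ x + φ y) ∧
    (∀ (c : k) (x), φ (c • x) = c • φ x) ∧
    Function.Bijective φ ∧
    (∀ x y, φ (mul α x y) = mul α⁻¹ (φ x) (φ y)) := by
  intro mul φ
  refine ⟨?_, ?_, ?_, ?_⟩
  · intro x y
    funext i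
    fin_cases i <;> simp [φ] <;> ring
  · intro c x
    funext i
    fin_cases i <;> simp [φ] <;> ring
  · constructor
    · intro x y h
      funext i
      have h1 := congrFun h 0
      have h0 := congrFun h 1
      have h2 := congrFun h 2
      have h3 := congrFun h 3
      have h4 := congrFun h 4
      simp [φ] at h0 h1 h2 h3 h4
      fin_cases i <;>
        simp_all [mul_eq_mul_left_iff, hα, pow_eq_zero_iff]
    · intro y
      refine ⟨![α⁻¹ * y 1, α⁻¹ * y 0, α⁻¹ ^ 2 * y 2, α⁻¹ ^ 3 * y 3, α⁻¹ * y 4], ?_⟩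
      funext i
      fin_cases i <;> simp [φ] <;> field_simp
  · intro x y
    funext i
    fin_cases i <;> simp [φ, mul] <;> (try field_simp) <;> ring
end

section
/- Let k be an algebraically closed field of characteristic ≠ 2 and let α = [α₁, α₂, α₃] ∈ k³ be a nonzero row vector. Then there exists an invertible 3×3 matrix A = (a_ij) over k such that the matrix B with rows (a₂₃, a₁₃, a₃₃), (a₂₂, a₁₂, a₃₂), (a₂₁, a₁₁, a₃₁) satisfies B·A = c·P for some nonzero c ∈ k, where P is the cyclic permutation matrix with rows (0,0,1), (1,0,0), (0,1,0), and moreover α·A = [1,0,0] or α·A = [0,0,1]. -/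
open Matrix

/-!
A row vector `α` encodes the binary quadratic form `Q = 2α₀x² + 2α₂xy − α₁y²`, and for
`g = !![u, v; w, z]` the matrix `A = t • symSq u v w z` sends `α` to `t` times the coefficient
vector of `Q ∘ g` (`vecMul_symSq`); every such `A` satisfies `B * A = (2 t det g)² • P`.
So it suffices to bring `Q` to `x²` or to `xy` by a change of basis, which over an
algebraically closed field of characteristic `≠ 2` is possible for every nonzero form: a
degenerate form has one isotropic line, a nondegenerate one has two, read off from a square
root of its discriminant.
-/

section

variable {R k : Type*}

def twistedTranspose (A : Matrix (Fin 3) (Fin 3) R) : Matrix (Fin 3) (Fin 3) R :=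
  Matrix.of ![![A 1 2, A 0 2, A 2 2], ![A 1 1, A 0 1, A 2 1], ![A 1 0, A 0 0, A 2 0]]

def cyclicPerm [Zero R] [One R] : Matrix (Fin 3) (Fin 3) R :=
  Matrix.of ![![0, 0, 1], ![1, 0, 0], ![0, 1, 0]]

lemma isUnit_cyclicPerm [CommRing R] : IsUnit (cyclicPerm : Matrix (Fin 3) (Fin 3) R) := by
  simp [isUnit_iff_isUnit_det, det_fin_three, cyclicPerm]

lemma isUnit_of_twistedTranspose_mul_self [Field k] {A : Matrix (Fin 3) (Fin 3) k} {c : k}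
    (hc : c ≠ 0) (h : twistedTranspose A * A = c • cyclicPerm) : IsUnit A :=
  isUnit_of_mul_isUnit_right <| h ▸ (isUnit_cyclicPerm.smul (Units.mk0 c hc) : IsUnit (c • _))

def symSq [CommRing R] (u v w z : R) : Matrix (Fin 3) (Fin 3) R :=
  Matrix.of ![![2 * u ^ 2, -(4 * v ^ 2), 4 * u * v],
              ![-w ^ 2, 2 * z ^ 2, -(2 * w * z)],
              ![2 * u * w, -(4 * v * z), 2 * (u * z + v * w)]]

lemma twistedTranspose_mul_self_smul_symSq [CommRing R] (t u v w z : R) :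
    twistedTranspose (t • symSq u v w z) * (t • symSq u v w z) =
      (2 * t * (u * z - v * w)) ^ 2 • cyclicPerm := by
  ext i j
  fin_cases i <;> fin_cases j <;>
    simp [twistedTranspose, symSq, cyclicPerm, mul_apply, Fin.sum_univ_succ] <;> ring

def binaryQuadForm [CommRing R] (α : Fin 3 → R) (x y : R) : R :=
  2 * α 0 * x ^ 2 + 2 * α 2 * x * y - α 1 * y ^ 2

def binaryQuadPolar [CommRing R] (α : Fin 3 → R) (x y x' y' : R) : R :=
  4 * α 0 * x * x' + 2 * α 2 * (x * y' + x' * y) - 2 * α 1 * y * y'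

lemma vecMul_symSq [CommRing R] (α : Fin 3 → R) (u v w z : R) :
    vecMul α (symSq u v w z) =
      ![binaryQuadForm α u w, -2 * binaryQuadForm α v z, binaryQuadPolar α u w v z] := by
  ext j
  fin_cases j <;>
    simp [symSq, binaryQuadForm, binaryQuadPolar, vecMul, dotProduct, Fin.sum_univ_succ] <;> ring

lemma exists_basis_normalizing_binaryQuadForm [Field k] [IsAlgClosed k] (h2 : (2 : k) ≠ 0)
    {α : Fin 3 → k} (hα : α ≠ 0) :
    ∃ u v w z : k, u * z - v * w ≠ 0 ∧ binaryQuadForm α v z = 0 ∧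
      (binaryQuadForm α u w ≠ 0 ∧ binaryQuadPolar α u w v z = 0 ∨
        binaryQuadForm α u w = 0 ∧ binaryQuadPolar α u w v z ≠ 0) := by
  unfold binaryQuadForm binaryQuadPolar
  generalize ha : α 0 = a
  generalize hb : α 1 = b
  generalize hd : α 2 = d
  by_cases ha0 : a = 0
  · subst ha0
    by_cases hd0 : d = 0
    · subst hd0
      have hb0 : b ≠ 0 := by
        rintro rfl
        exact hα (funext fun i => by fin_cases i <;> simp [ha, hb, hd])
      exact ⟨0, 1, 1, 0, by norm_num, by ring, Or.inl ⟨by simpa using hb0, by ring⟩⟩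
    · have h2d : 2 * d ≠ 0 := mul_ne_zero h2 hd0
      exact ⟨1, b, 0, 2 * d, by simpa using h2d, by ring,
        Or.inr ⟨by ring, ne_of_eq_of_ne (by ring) (mul_ne_zero h2d h2d)⟩⟩
  · have h2a : 2 * a ≠ 0 := mul_ne_zero h2 ha0
    by_cases hD : d ^ 2 + 2 * a * b = 0
    · exact ⟨1, -d, 0, 2 * a, by simpa using h2a, by linear_combination (-2 * a) * hD,
        Or.inl ⟨by simpa using h2a, by ring⟩⟩
    · obtain ⟨s, hs⟩ := IsAlgClosed.exists_pow_nat_eq (d ^ 2 + 2 * a * b) two_pos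
      have h2s : 2 * s ≠ 0 := mul_ne_zero h2 (by rintro rfl; exact hD (by rw [← hs]; ring))
      exact ⟨-d + s, -d - s, 2 * a, 2 * a, ne_of_eq_of_ne (by ring) (mul_ne_zero h2a h2s),
        by linear_combination (2 * a) * hs, Or.inr ⟨by linear_combination (2 * a) * hs,
          ne_of_eq_of_ne (by linear_combination (4 * a) * hs)
            (neg_ne_zero.mpr (mul_ne_zero (mul_ne_zero h2a h2s) h2s))⟩⟩

lemma isUnit_smul_symSq_and_twistedTranspose_mul_self [Field k] (h2 : (2 : k) ≠ 0)
    {t u v w z : k} (ht : t ≠ 0) (hdet : u * z - v * w ≠ 0) :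
    IsUnit (t • symSq u v w z) ∧ ∃ c : k, c ≠ 0 ∧
      twistedTranspose (t • symSq u v w z) * (t • symSq u v w z) = c • cyclicPerm := by
  have hc : (2 * t * (u * z - v * w)) ^ 2 ≠ 0 := by simp [h2, ht, hdet]
  exact ⟨isUnit_of_twistedTranspose_mul_self hc (twistedTranspose_mul_self_smul_symSq ..),
    _, hc, twistedTranspose_mul_self_smul_symSq ..⟩

end

/-- Over an algebraically closed field `k` of characteristic ≠ 2, for any
nonzero row vector `α = [α₁, α₂, α₃]` there is an invertible matrix
`A = (aᵢⱼ)` such that the matrix `B` with rows `(a₂₃, a₁₃, a₃₃)`,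
`(a₂₂, a₁₂, a₃₂)`, `(a₂₁, a₁₁, a₃₁)` satisfies `B·A = c·P` for some nonzero
`c`, where `P` is the cyclic permutation matrix, and moreover
`α·A = [1,0,0]` or `α·A = [0,0,1]`. -/
theorem stmt_19 {k : Type*} [Field k] [IsAlgClosed k] (hchar : (2 : k) ≠ 0)
    (α : Fin 3 → k) (hα : α ≠ 0) :
    ∃ A : Matrix (Fin 3) (Fin 3) k, IsUnit A ∧
      ∃ c : k, c ≠ 0 ∧
        (Matrix.of ![![A 1 2, A 0 2, A 2 2],
                     ![A 1 1, A 0 1, A 2 1],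
                     ![A 1 0, A 0 0, A 2 0]]) * A =
          c • (Matrix.of ![![(0 : k), 0, 1], ![1, 0, 0], ![0, 1, 0]]) ∧
        (Matrix.vecMul α A = ![1, 0, 0] ∨ Matrix.vecMul α A = ![0, 0, 1]) := by
  obtain ⟨u, v, w, z, hdet, hv, ⟨hu, hp⟩ | ⟨hu, hp⟩⟩ :=
    exists_basis_normalizing_binaryQuadForm hchar hα
  · obtain ⟨hA, c, hc, hBA⟩ :=
      isUnit_smul_symSq_and_twistedTranspose_mul_self hchar (inv_ne_zero hu) hdet
    refine ⟨_, hA, c, hc, hBA, Or.inl ?_⟩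
    rw [vecMul_smul, vecMul_symSq, hv, hp]
    simp [hu]
  · obtain ⟨hA, c, hc, hBA⟩ :=
      isUnit_smul_symSq_and_twistedTranspose_mul_self hchar (inv_ne_zero hp) hdet
    refine ⟨_, hA, c, hc, hBA, Or.inr ?_⟩
    rw [vecMul_smul, vecMul_symSq, hv, hu]
    simp [hp]
end
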